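/- arXiv:2303.12083 — 9 statements merged into one kernel-verified Lean document; each statement's English description precedes it below -/
import Mathlib

section
/- If f : ℝ≥0 → ℝ≥0 is continuous, satisfies f(f(x)) = x·f(x) for all x ≥ 0, and f is not identically zero, then f(1) = 1. -/
open Set Filter Topology

/-- If `f 0 = 0`, `f 1 = 0`, then `f` vanishes on `[0,1)`. -/
lemma aux_no_unit (f : NNReal → NNReal) (hf : Continuous f)
    (h : ∀ x, f (f x) = x * f x) (h0 : f 0 = 0) (h1 : f 1 = 0)
    {y : NNReal} (hy1 : y < 1) : f y = 0 := by
  by_contra hfy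
  have hzero : IsClosed (f ⁻¹' {0}) := isClosed_singleton.preimage hf
  -- zero to the right of y
  have hb := (isClosed_Icc.inter hzero).csInf_mem
    (⟨1, ⟨hy1.le, le_rfl⟩, h1⟩ : (Icc y 1 ∩ f ⁻¹' {0}).Nonempty)
    (OrderBot.bddBelow _)
  obtain ⟨⟨hyb, hb1⟩, hfb⟩ := hb
  have hfb : f (sInf (Icc y 1 ∩ f ⁻¹' {0})) = 0 := hfb
  have hyb' : y < sInf (Icc y 1 ∩ f ⁻¹' {0}) :=
    lt_of_le_of_ne hyb (fun heq => hfy (by rw [heq]; exact hfb))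
  -- zero to the left of y
  have ha := (isClosed_Icc.inter hzero).csSup_mem
    (⟨0, ⟨le_rfl, zero_le⟩, h0⟩ : (Icc 0 y ∩ f ⁻¹' {0}).Nonempty)
    ⟨y, fun z hz => hz.1.2⟩
  obtain ⟨⟨-, hay⟩, hfa⟩ := ha
  have hfa : f (sSup (Icc 0 y ∩ f ⁻¹' {0})) = 0 := hfa
  have hay' : sSup (Icc 0 y ∩ f ⁻¹' {0}) < y :=
    lt_of_le_of_ne hay (fun heq => hfy (by rw [← heq]; exact hfa))
  have hv2 : f y / 2 ≠ 0 := div_ne_zero hfy two_ne_zero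
  have hv2v : f y / 2 < f y := NNReal.half_lt_self hfy
  -- intermediate value on [a, y]
  obtain ⟨p, hp, hfp⟩ := intermediate_value_Icc hay'.le hf.continuousOn
    (show f y / 2 ∈ Icc (f (sSup (Icc 0 y ∩ f ⁻¹' {0}))) (f y) from
      ⟨by rw [hfa]; exact zero_le, hv2v.le⟩)
  -- intermediate value on [y, b]
  obtain ⟨q, hq, hfq⟩ := intermediate_value_Icc' hyb'.le hf.continuousOn
    (show f y / 2 ∈ Icc (f (sInf (Icc y 1 ∩ f ⁻¹' {0}))) (f y) from
      ⟨by rw [hfb]; exact zero_le, hv2v.le⟩)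
  have hpy : p < y := lt_of_le_of_ne hp.2
    (fun heq => hv2v.ne' (heq ▸ hfp))
  have hyq : y < q := lt_of_le_of_ne hq.1
    (fun heq => hv2v.ne' (heq.symm ▸ hfq))
  have e1 := h p
  have e2 := h q
  rw [hfp] at e1
  rw [hfq] at e2
  have hpq : p = q := mul_right_cancel₀ hv2 (by rw [← e1, ← e2])
  exact absurd hpq (hpy.trans hyq).ne

theorem f_one_eq_one (f : NNReal → NNReal) (hf : Continuous f)
    (h : ∀ x, f (f x) = x * f x) (hne : ∃ x, f x ≠ 0) : f 1 = 1 := by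
  have key : f (f 1) = f 1 := by simpa using h 1
  by_cases hc0 : f 1 = 0
  · -- contradiction with hne
    exfalso
    have h0 : f 0 = 0 := by
      have := h 1
      rw [hc0] at this
      simpa using this
    obtain ⟨x₀, hx₀⟩ := hne
    -- produce y < 1 with f y ≠ 0
    have hmain : ∃ y, y < 1 ∧ f y ≠ 0 := by
      rcases lt_trichotomy x₀ 1 with hlt | heq | hgt
      · exact ⟨x₀, hlt, hx₀⟩
      · exact absurd (heq ▸ hc0) hx₀
      · -- x₀ > 1 : find rightmost zero a in [1, x₀], pick z just right of a
        have hzero : IsClosed (f ⁻¹' {0}) := isClosed_singleton.preimage hf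
        have hSbdd : BddAbove (Icc 1 x₀ ∩ f ⁻¹' {0}) := ⟨x₀, fun z hz => hz.1.2⟩
        have ha := (isClosed_Icc.inter hzero).csSup_mem
          (⟨1, ⟨le_rfl, hgt.le⟩, hc0⟩ : (Icc 1 x₀ ∩ f ⁻¹' {0}).Nonempty) hSbdd
        obtain ⟨⟨h1a, hax⟩, hfa⟩ := ha
        have hfa : f (sSup (Icc 1 x₀ ∩ f ⁻¹' {0})) = 0 := hfa
        set a := sSup (Icc 1 x₀ ∩ f ⁻¹' {0}) with hadef
        have hax' : a < x₀ :=
          lt_of_le_of_ne hax (fun heq => hx₀ (by rw [← heq]; exact hfa))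
        have hpos : ∀ z, a < z → z ≤ x₀ → f z ≠ 0 := by
          intro z haz hzx hfz
          exact absurd (le_csSup hSbdd (⟨⟨h1a.trans haz.le, hzx⟩, hfz⟩ :
            z ∈ Icc 1 x₀ ∩ f ⁻¹' {0})) (not_le_of_gt haz)
        -- neighborhood where f < 1
        have hU : IsOpen (f ⁻¹' Iio 1) := (isOpen_Iio).preimage hf
        have haU : a ∈ f ⁻¹' Iio 1 := by
          simp only [mem_preimage, mem_Iio, hfa]; exact zero_lt_one
        have hn1 : f ⁻¹' Iio 1 ∈ 𝓝[>] a := mem_nhdsWithin_of_mem_nhds (hU.mem_nhds haU)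
        have hn2 : Ioo a x₀ ∈ 𝓝[>] a := Ioo_mem_nhdsGT_of_mem ⟨le_rfl, hax'⟩
        have : NeBot (𝓝[>] a) := nhdsGT_neBot_of_exists_gt ⟨x₀, hax'⟩
        obtain ⟨z, hz1, hz2⟩ := Filter.nonempty_of_mem (Filter.inter_mem hn1 hn2)
        have hfz : f z ≠ 0 := hpos z hz2.1 hz2.2.le
        have hz0 : z ≠ 0 := by
          intro hz
          exact absurd (hz ▸ hz2.1) (not_lt_of_ge (zero_le (a := a)))
        exact ⟨f z, hz1, by rw [h z]; exact mul_ne_zero hz0 hfz⟩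
    obtain ⟨y, hy1, hfy⟩ := hmain
    exact hfy (aux_no_unit f hf h h0 hc0 hy1)
  · -- f 1 ≠ 0 : from f (f 1) = f 1 and functional equation, f 1 = 1
    have hcc : f 1 = f 1 * f 1 := by
      have := h (f 1)
      rw [key, key] at this
      exact this
    have hmul : f 1 * 1 = f 1 * f 1 := by rw [mul_one]; exact hcc
    exact (mul_left_cancel₀ hc0 hmul).symm
end

section
/- A continuous function f : ℝ≥0 → ℝ≥0 satisfies f(f(x)) = x·f(x) for all x ≥ 0 if and only if f is identically zero or f(x) = x^φ for all x, where φ = (1+√5)/2. -/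
lemma fib_back (φ : ℝ) (hφ1 : 1 < φ) (hφ3 : φ < 2) (hφ2 : φ^2 = φ + 1)
    (v : ℕ → ℝ) (hrec : ∀ n, v (n+2) = v n - v (n+1)) (hpos : ∀ n, 0 < v n) :
    φ * v 1 = v 0 := by
  have hφ0 : (0:ℝ) < φ := by linarith
  have hden : 2*φ - 1 ≠ 0 := by intro hc; nlinarith
  set A : ℝ := (v 1 + φ * v 0) / (2*φ - 1) with hA
  set B : ℝ := v 0 - A with hB
  have h0 : v 0 = A * (φ-1) ^ 0 + B * (-φ) ^ 0 := by simp [hB]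
  have h1 : v 1 = A * (φ-1) ^ 1 + B * (-φ) ^ 1 := by
    have hA' : A * (2*φ-1) = v 1 + φ * v 0 := by rw [hA]; exact div_mul_cancel₀ _ hden
    rw [hB]; linear_combination -hA'
  have key : ∀ n, v n = A * (φ-1) ^ n + B * (-φ) ^ n := by
    intro n
    induction n using Nat.twoStepInduction with
    | zero => exact h0
    | one => exact h1
    | more n ih1 ih2 =>
      rw [hrec n, ih1, ih2]
      linear_combination (-(A * (φ-1)^n) - B * (-φ)^n) * hφ2
  have hB0 : B = 0 := by
    by_contra hB0
    have hBabs : 0 < |B| := abs_pos.2 hB0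
    obtain ⟨N, hN⟩ := pow_unbounded_of_one_lt (|A| / |B|) hφ1
    have hAB : |A| < |B| * φ ^ N := by
      rw [div_lt_iff₀ hBabs] at hN; linarith [hN]
    have hmu0 : (0:ℝ) ≤ φ - 1 := by linarith
    have hmu1 : φ - 1 ≤ 1 := by linarith
    rcases lt_or_gt_of_ne hB0 with hBneg | hBpos
    · -- take n = 2*N
      have hp : (-φ) ^ (2*N) = φ ^ (2*N) := (Even.neg_pow (even_two_mul N) φ)
      have hub : A * (φ-1)^(2*N) ≤ |A| := by
        have e1 : (φ-1)^(2*N) ≤ 1 := pow_le_one₀ hmu0 hmu1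
        have e2 : (0:ℝ) ≤ (φ-1)^(2*N) := pow_nonneg hmu0 _
        calc A * (φ-1)^(2*N) ≤ |A| * (φ-1)^(2*N) :=
              mul_le_mul_of_nonneg_right (le_abs_self A) e2
          _ ≤ |A| * 1 := mul_le_mul_of_nonneg_left e1 (abs_nonneg A)
          _ = |A| := mul_one _
      have h2 : φ ^ N ≤ φ ^ (2*N) := pow_le_pow_right₀ hφ1.le (by omega)
      have hint : (-B) * φ ^ N ≤ (-B) * φ ^ (2*N) :=
        mul_le_mul_of_nonneg_left h2 (neg_nonneg.2 hBneg.le)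
      rw [abs_of_neg hBneg] at hAB
      have := hpos (2*N)
      rw [key (2*N), hp] at this
      linarith
    · -- take n = 2*N+1
      have hp : (-φ) ^ (2*N+1) = -(φ ^ (2*N+1)) := (Odd.neg_pow ⟨N, by ring⟩ φ)
      have hub : A * (φ-1)^(2*N+1) ≤ |A| := by
        have e1 : (φ-1)^(2*N+1) ≤ 1 := pow_le_one₀ hmu0 hmu1
        have e2 : (0:ℝ) ≤ (φ-1)^(2*N+1) := pow_nonneg hmu0 _
        calc A * (φ-1)^(2*N+1) ≤ |A| * (φ-1)^(2*N+1) :=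
              mul_le_mul_of_nonneg_right (le_abs_self A) e2
          _ ≤ |A| * 1 := mul_le_mul_of_nonneg_left e1 (abs_nonneg A)
          _ = |A| := mul_one _
      have h2 : φ ^ N ≤ φ ^ (2*N+1) := pow_le_pow_right₀ hφ1.le (by omega)
      have hint : B * φ ^ N ≤ B * φ ^ (2*N+1) :=
        mul_le_mul_of_nonneg_left h2 hBpos.le
      rw [abs_of_pos hBpos] at hAB
      have := hpos (2*N+1)
      rw [key (2*N+1), hp] at this
      linarith
  have k0 := key 0
  have k1 := key 1
  rw [hB0] at k0 k1
  simp at k0 k1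
  have hv1 : v 1 = v 0 * (φ - 1) := by rw [k1, k0]
  rw [hv1]
  linear_combination v 0 * hφ2

theorem hirsch_eq_iff (f : NNReal → NNReal) (hf : Continuous f)
    (φ : ℝ) (hφ : φ = (1 + Real.sqrt 5) / 2) :
    (∀ x, f (f x) = x * f x) ↔ (∀ x, f x = 0) ∨ (∀ x, f x = x ^ φ) := by
  have hs5 : Real.sqrt 5 ^ 2 = 5 := Real.sq_sqrt (by norm_num)
  have hs5nn : (0:ℝ) ≤ Real.sqrt 5 := Real.sqrt_nonneg 5
  have hs5gt : (2:ℝ) < Real.sqrt 5 := by nlinarith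
  have hs5lt : Real.sqrt 5 < 3 := by nlinarith
  have hφ1 : 1 < φ := by rw [hφ]; linarith
  have hφ3 : φ < 2 := by rw [hφ]; linarith
  have hφ2 : φ ^ 2 = φ + 1 := by rw [hφ]; nlinarith
  have hφ0 : φ ≠ 0 := by intro hc; rw [hc] at hφ1; norm_num at hφ1
  constructor
  · intro h
    by_cases hz : ∀ x, f x = 0
    · exact Or.inl hz
    right
    -- f 0 = 0
    have hf0 : f 0 = 0 := by
      have h1 : f (f 0) = 0 := by simpa using h 0
      have h2 := h (f 0)
      rw [h1] at h2
      simpa using h2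
    -- injectivity on nonzero values
    have inj : ∀ a b : NNReal, f a = f b → f a ≠ 0 → a = b := by
      intro a b hab hne
      have ha := h a
      have hb := h b
      rw [hab] at ha
      exact mul_right_cancel₀ (hab ▸ hne) (ha.symm.trans hb)
    -- bump lemma
    have bump : ∀ p m q : NNReal, p ≤ m → m ≤ q → f p = 0 → f q = 0 → f m = 0 := by
      intro p m q hpm hmq hp hq
      by_contra hm
      have hhalf : f m / 2 < f m := NNReal.half_lt_self hm
      have hhalf0 : f m / 2 ≠ 0 := by
        simp only [ne_eq, div_eq_zero_iff]
        push_neg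
        exact ⟨hm, by norm_num⟩
      obtain ⟨s, hsmem, hfs⟩ := intermediate_value_Icc hpm hf.continuousOn
        (by rw [hp]; exact ⟨zero_le, hhalf.le⟩)
      obtain ⟨t, htmem, hft⟩ := intermediate_value_Icc' hmq hf.continuousOn
        (by rw [hq]; exact ⟨zero_le, hhalf.le⟩)
      have hst : s = t := inj s t (by rw [hfs, hft]) (hfs ▸ hhalf0)
      have hsm : s < m := lt_of_le_of_ne hsmem.2
        (fun hc => (ne_of_lt hhalf) (hc ▸ hfs).symm)
      have htm : m < t := lt_of_le_of_ne htmem.1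
        (fun hc => (ne_of_lt hhalf) (by rw [← hc] at hft; exact hft.symm))
      exact absurd hst (hsm.trans htm).ne
    -- positivity
    have pos : ∀ x : NNReal, x ≠ 0 → f x ≠ 0 := by
      by_contra hcon
      push_neg at hcon
      obtain ⟨a, ha0, hfa⟩ := hcon
      obtain ⟨b, hb⟩ := not_forall.1 hz
      have zdc : ∀ z x : NNReal, f z = 0 → x ≤ z → f x = 0 :=
        fun z x hz' hxz => bump 0 x z (zero_le : (0:NNReal) ≤ x) hxz hf0 hz'
      have hZbdd : BddAbove {x : NNReal | f x = 0} := by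
        refine ⟨b, fun z hz' => ?_⟩
        by_contra hc
        exact hb (zdc z b hz' (le_of_not_ge hc))
      have hZcl : IsClosed {x : NNReal | f x = 0} := isClosed_eq hf continuous_const
      set p := sSup {x : NNReal | f x = 0} with hp
      have hpZ : f p = 0 := hZcl.csSup_mem ⟨a, hfa⟩ hZbdd
      have hap : a ≤ p := le_csSup hZbdd hfa
      have hp0 : 0 < p := lt_of_lt_of_le (pos_iff_ne_zero.mpr ha0) hap
      -- find x > p with f x < p
      have hev : ∀ᶠ x in nhdsWithin p (Set.Ioi p), f x < p := by
        apply Filter.Eventually.filter_mono nhdsWithin_le_nhds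
        have : {x : NNReal | f x < p} ∈ nhds p := by
          apply IsOpen.mem_nhds (isOpen_lt hf continuous_const)
          simpa [hpZ] using hp0
        exact this
      obtain ⟨x, hxlt, hxmem⟩ := (hev.and self_mem_nhdsWithin).exists
      have hfx0 : f x ≠ 0 := by
        intro hc
        exact absurd hxmem (not_lt.2 (le_csSup hZbdd hc))
      have hffx : f (f x) = 0 := zdc p (f x) hpZ hxlt.le
      rw [h x] at hffx
      rcases mul_eq_zero.1 hffx with hc | hc
      · exact (hp0.trans hxmem).ne' hc
      · exact hfx0 hc
    -- full injectivity
    have hinj : Function.Injective f := by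
      intro a b hab
      by_cases h0 : f a = 0
      · have hb0 : f b = 0 := hab ▸ h0
        have ha' : a = 0 := by by_contra hc; exact pos a hc h0
        have hb' : b = 0 := by by_contra hc; exact pos b hc hb0
        rw [ha', hb']
      · exact inj a b hab h0
    -- strict monotonicity
    have hmono : StrictMono f := by
      intro a b hab
      rcases lt_trichotomy (f a) (f b) with h' | h' | h'
      · exact h'
      · exact absurd (hinj h') hab.ne
      · exfalso
        obtain ⟨s, hsmem, hfs⟩ := intermediate_value_Icc (zero_le : (0:NNReal) ≤ a) hf.continuousOn
          (by rw [hf0]; exact ⟨zero_le, h'.le⟩)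
        have : s = b := hinj hfs
        rw [this] at hsmem
        exact absurd hsmem.2 (not_le.2 hab)
    have hf1 : f 1 = 1 := by
      have := h 1
      rw [one_mul] at this
      exact hinj this
    -- surjectivity
    have hsurj : ∀ y : NNReal, ∃ x, f x = y := by
      intro y
      set M := max 1 y with hM
      have h1M : (1:NNReal) ≤ M := le_max_left _ _
      have hfM : (1:NNReal) ≤ f M := hf1 ▸ hmono.monotone h1M
      have hyffM : y ≤ f (f M) := by
        rw [h M]
        calc y ≤ M := le_max_right _ _
          _ = M * 1 := (mul_one M).symm
          _ ≤ M * f M := mul_le_mul_right hfM M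
      obtain ⟨x, _, hx⟩ := intermediate_value_Icc (zero_le : (0:NNReal) ≤ f M) hf.continuousOn
        (by rw [hf0]; exact ⟨zero_le, hyffM⟩)
      exact ⟨x, hx⟩
    set g : NNReal → NNReal := fun y => (hsurj y).choose with hgdef
    have hg : ∀ y, f (g y) = y := fun y => (hsurj y).choose_spec
    have hfy : ∀ y, f y = y * g y := by
      intro y
      have := h (g y)
      rw [hg] at this
      rw [this, mul_comm]
    have hg1 : g 1 = 1 := hinj (by rw [hg, hf1])
    have hg_gt1 : ∀ y : NNReal, 1 < y → 1 < g y := by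
      intro y hy
      by_contra hc
      push_neg at hc
      have := hmono.monotone hc
      rw [hg, hf1] at this
      exact absurd hy (not_lt.2 this)
    have hg_lt1 : ∀ y : NNReal, y < 1 → g y < 1 := by
      intro y hy
      by_contra hc
      push_neg at hc
      have := hmono.monotone hc
      rw [hg, hf1] at this
      exact absurd hy (not_lt.2 this)
    have hg_ne0 : ∀ y : NNReal, y ≠ 0 → g y ≠ 0 := by
      intro y hy hc
      apply hy
      rw [← hg y, hc, hf0]
    -- main computation for x ≠ 0, 1
    have main : ∀ x : NNReal, x ≠ 0 → x ≠ 1 → f x = x ^ φ := by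
      intro x hx0 hx1
      set y : ℕ → NNReal := fun n => g^[n] x with hy
      have hy0 : y 0 = x := rfl
      have hys : ∀ n, y (n+1) = g (y n) := fun n => Function.iterate_succ_apply' g n x
      have hyf : ∀ n, f (y (n+1)) = y n := by intro n; rw [hys, hg]
      have hyrec : ∀ n, y n = y (n+1) * y (n+2) := by
        intro n
        conv_lhs => rw [← hyf n]
        rw [hfy (y (n+1)), ← hys]
      have hyne : ∀ n, y n ≠ 0 := by
        intro n
        induction n with
        | zero => exact hx0
        | succ k ih => rw [hys]; exact hg_ne0 _ ih
      set v : ℕ → ℝ := fun n => Real.log ((y n : NNReal) : ℝ) with hv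
      have hvrec : ∀ n, v (n+2) = v n - v (n+1) := by
        intro n
        have hcast : ((y n : NNReal) : ℝ) = ((y (n+1) : NNReal) : ℝ) * ((y (n+2) : NNReal) : ℝ) := by
          exact_mod_cast congrArg (fun z : NNReal => (z : ℝ)) (hyrec n)
        have e1 : ((y (n+1) : NNReal) : ℝ) ≠ 0 := by
          exact_mod_cast hyne (n+1)
        have e2 : ((y (n+2) : NNReal) : ℝ) ≠ 0 := by
          exact_mod_cast hyne (n+2)
        simp only [hv]
        rw [hcast, Real.log_mul e1 e2]
        ring
      have hkey : φ * v 1 = v 0 := by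
        rcases lt_or_gt_of_ne hx1 with hxlt | hxgt
        · -- x < 1 : all y n < 1, v n < 0
          have hylt : ∀ n, y n < 1 := by
            intro n
            induction n with
            | zero => exact hxlt
            | succ k ih => rw [hys]; exact hg_lt1 _ ih
          have hvneg : ∀ n, 0 < -v n := by
            intro n
            simp only [hv, neg_pos]
            apply Real.log_neg
            · exact_mod_cast pos_iff_ne_zero.mpr (hyne n)
            · exact_mod_cast hylt n
          have := fib_back φ hφ1 hφ3 hφ2 (fun n => -(v n))
            (by intro n; beta_reduce; rw [hvrec n]; ring) hvneg
          beta_reduce at this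
          linarith
        · -- 1 < x
          have hygt : ∀ n, 1 < y n := by
            intro n
            induction n with
            | zero => exact hxgt
            | succ k ih => rw [hys]; exact hg_gt1 _ ih
          have hvpos : ∀ n, 0 < v n := by
            intro n
            simp only [hv]
            apply Real.log_pos
            exact_mod_cast hygt n
          exact fib_back φ hφ1 hφ3 hφ2 v hvrec hvpos
      -- conclude
      have hxpos : (0:ℝ) < (x : ℝ) := by exact_mod_cast pos_iff_ne_zero.mpr hx0
      have hfx0 : f x ≠ 0 := pos x hx0
      have hfxpos : (0:ℝ) < ((f x : NNReal) : ℝ) := by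
        exact_mod_cast pos_iff_ne_zero.mpr hfx0
      have hlogf : Real.log ((f x : NNReal) : ℝ) = Real.log (x : ℝ) * φ := by
        have hcast : ((f x : NNReal) : ℝ) = (x : ℝ) * ((y 1 : NNReal) : ℝ) := by
          have hy1 : y 1 = g x := by rw [hys 0, hy0]
          rw [hfy x, hy1]
          push_cast
          ring
        have e2 : ((y 1 : NNReal) : ℝ) ≠ 0 := by exact_mod_cast hyne 1
        rw [hcast, Real.log_mul hxpos.ne' e2]
        have hv0 : Real.log (x:ℝ) = v 0 := by simp only [hv, hy0]
        have hv1 : Real.log ((y 1 : NNReal) : ℝ) = v 1 := rfl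
        rw [hv0, hv1]
        have hsum : φ * (v 0 + v 1) = φ * (v 0 * φ) := by
          linear_combination hkey - v 0 * hφ2
        have hsum' := mul_left_cancel₀ hφ0 hsum
        exact hsum'
      apply NNReal.coe_injective
      rw [NNReal.coe_rpow, Real.rpow_def_of_pos hxpos, ← hlogf, Real.exp_log hfxpos]
    intro x
    rcases eq_or_ne x 0 with hx0 | hx0
    · rw [hx0, hf0, NNReal.zero_rpow hφ0]
    rcases eq_or_ne x 1 with hx1 | hx1
    · rw [hx1, hf1, NNReal.one_rpow]
    · exact main x hx0 hx1
  · rintro (h0 | hp) x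
    · simp [h0]
    · simp only [hp]
      rcases eq_or_ne x 0 with hx0 | hx0
      · rw [hx0, NNReal.zero_rpow hφ0, NNReal.zero_rpow hφ0, zero_mul]
      · rw [← NNReal.rpow_mul x φ φ]
        rw [show x * x ^ φ = x ^ ((1:ℝ) + φ) by rw [NNReal.rpow_add hx0, NNReal.rpow_one]]
        congr 1
        linear_combination hφ2
end

section
/- If real numbers a₁, ..., aₙ (n ≥ 2, all positive) satisfy the cyclic relations a₃ = a₁a₂, a₄ = a₂a₃, ..., aₙ = a_{n-2}a_{n-1}, a₁ = a_{n-1}aₙ, a₂ = aₙa₁, then a₁ = a₂ = ... = aₙ = 1. -/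
lemma max_step (n : ℕ) (a : ZMod n → ℝ) (hpos : ∀ k, 0 < a k)
    (hrec : ∀ k : ZMod n, a (k + 2) = a k * a (k + 1)) (m : ZMod n)
    (hm : ∀ k, a k ≤ a m) : a (m - 1) = 1 ∧ a (m - 2) = a m := by
  have e1 : a (m + 1) = a (m - 1) * a m := by
    have h := hrec (m - 1)
    have h2 : m - 1 + 2 = m + 1 := by ring
    have h3 : m - 1 + 1 = m := by ring
    rwa [h2, h3] at h
  have h1 : a (m - 1) ≤ 1 := by nlinarith [hm (m + 1), hpos m]
  have e2 : a m = a (m - 2) * a (m - 1) := by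
    have h := hrec (m - 2)
    have h2 : m - 2 + 2 = m := by ring
    have h3 : m - 2 + 1 = m - 1 := by ring
    rwa [h2, h3] at h
  have h2 : a (m - 2) = a m := by
    have := hpos (m - 2)
    have := hpos (m - 1)
    have : a m ≤ a (m - 2) := by nlinarith
    exact le_antisymm (hm _) this
  have h3 : a (m - 1) = 1 := by
    have hp := hpos m
    rw [h2] at e2
    have : a m * a (m - 1) = a m * 1 := by linarith [e2]
    exact mul_left_cancel₀ (ne_of_gt hp) this
  exact ⟨h3, h2⟩

lemma min_step (n : ℕ) (a : ZMod n → ℝ) (hpos : ∀ k, 0 < a k)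
    (hrec : ∀ k : ZMod n, a (k + 2) = a k * a (k + 1)) (m : ZMod n)
    (hm : ∀ k, a m ≤ a k) : a (m - 1) = 1 ∧ a (m - 2) = a m := by
  have e1 : a (m + 1) = a (m - 1) * a m := by
    have h := hrec (m - 1)
    have h2 : m - 1 + 2 = m + 1 := by ring
    have h3 : m - 1 + 1 = m := by ring
    rwa [h2, h3] at h
  have h1 : 1 ≤ a (m - 1) := by nlinarith [hm (m + 1), hpos m]
  have e2 : a m = a (m - 2) * a (m - 1) := by
    have h := hrec (m - 2)
    have h2 : m - 2 + 2 = m := by ring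
    have h3 : m - 2 + 1 = m - 1 := by ring
    rwa [h2, h3] at h
  have h2 : a (m - 2) = a m := by
    have := hpos (m - 2)
    have := hpos (m - 1)
    have : a (m - 2) ≤ a m := by nlinarith
    exact le_antisymm this (hm _)
  have h3 : a (m - 1) = 1 := by
    have hp := hpos m
    rw [h2] at e2
    have : a m * a (m - 1) = a m * 1 := by linarith [e2]
    exact mul_left_cancel₀ (ne_of_gt hp) this
  exact ⟨h3, h2⟩

lemma extremum_eq_one (n : ℕ) (a : ZMod n → ℝ) (hpos : ∀ k, 0 < a k)
    (hrec : ∀ k : ZMod n, a (k + 2) = a k * a (k + 1)) (m : ZMod n)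
    (h1 : a (m - 1) = 1) (h2 : a (m - 2) = a m)
    (h1' : a (m - 2 - 1) = 1) : a m = 1 := by
  have e : a (m - 1) = a (m - 3) * a (m - 2) := by
    have h := hrec (m - 3)
    have ha : m - 3 + 2 = m - 1 := by ring
    have hb : m - 3 + 1 = m - 2 := by ring
    rwa [ha, hb] at h
  have hc : m - 2 - 1 = m - 3 := by ring
  rw [hc] at h1'
  rw [h1, h1', h2, one_mul] at e
  exact e.symm

theorem cyclic_mul_fib_all_one (n : ℕ) (hn : 2 ≤ n) (a : ZMod n → ℝ)
    (hpos : ∀ k, 0 < a k) (hrec : ∀ k : ZMod n, a (k + 2) = a k * a (k + 1)) :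
    ∀ k, a k = 1 := by
  haveI : NeZero n := ⟨by omega⟩
  obtain ⟨M, hM⟩ := Finite.exists_max a
  obtain ⟨m, hm⟩ := Finite.exists_min a
  -- max is 1
  obtain ⟨hM1, hM2⟩ := max_step n a hpos hrec M hM
  have hM' : ∀ k, a k ≤ a (M - 2) := fun k => hM2 ▸ hM k
  obtain ⟨hM1', _⟩ := max_step n a hpos hrec (M - 2) hM'
  have hmax : a M = 1 := extremum_eq_one n a hpos hrec M hM1 hM2 hM1'
  -- min is 1
  obtain ⟨hm1, hm2⟩ := min_step n a hpos hrec m hm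
  have hm' : ∀ k, a (m - 2) ≤ a k := fun k => hm2 ▸ hm k
  obtain ⟨hm1', _⟩ := min_step n a hpos hrec (m - 2) hm'
  have hmin : a m = 1 := extremum_eq_one n a hpos hrec m hm1 hm2 hm1'
  intro k
  have h1 := hM k
  have h2 := hm k
  linarith
end

section
/- For all integers n, the determinant of the 3×3 matrix with rows (E_{n-2}, E_{n-3}, E_{n-1}), (E_{n-1}, E_{n-2}, E_n), (E_n, E_{n-1}, E_{n+1}) equals 1, where E is the Narayana cows sequence. -/
theorem narayana_det_eq_one (E : ℤ → ℤ)
    (hrec : ∀ n : ℤ, E (n + 3) = E n + E (n + 2))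
    (h0 : E 0 = 0) (h1 : E 1 = 1) (h2 : E 2 = 1) :
    ∀ n : ℤ,
      Matrix.det !![E (n - 2), E (n - 3), E (n - 1);
                    E (n - 1), E (n - 2), E n;
                    E n, E (n - 1), E (n + 1)] = 1 := by
  have em1 : E (-1) = 0 := by
    have := hrec (-1); norm_num at this; linarith
  have em2 : E (-2) = 1 := by
    have := hrec (-2); norm_num at this; linarith
  have em3 : E (-3) = 0 := by
    have := hrec (-3); norm_num at this; linarith
  have hstep : ∀ n : ℤ,
      Matrix.det !![E (n + 1 - 2), E (n + 1 - 3), E (n + 1 - 1);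
                    E (n + 1 - 1), E (n + 1 - 2), E (n + 1);
                    E (n + 1), E (n + 1 - 1), E (n + 1 + 1)] =
      Matrix.det !![E (n - 2), E (n - 3), E (n - 1);
                    E (n - 1), E (n - 2), E n;
                    E n, E (n - 1), E (n + 1)] := by
    intro n
    have r1 : E (n + 1) = E (n - 2) + E n := by
      have := hrec (n - 2)
      rw [show n - 2 + 3 = n + 1 by ring, show n - 2 + 2 = n by ring] at this
      exact this
    have r2 : E (n + 2) = E (n - 1) + E (n + 1) := by
      have := hrec (n - 1)
      rw [show n - 1 + 3 = n + 2 by ring, show n - 1 + 2 = n + 1 by ring] at this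
      exact this
    have r0 : E n = E (n - 3) + E (n - 1) := by
      have := hrec (n - 3)
      rw [show n - 3 + 3 = n by ring, show n - 3 + 2 = n - 1 by ring] at this
      exact this
    rw [show n + 1 - 2 = n - 1 by ring, show n + 1 - 3 = n - 2 by ring,
        show n + 1 - 1 = n by ring, show n + 1 + 1 = n + 2 by ring]
    have ha : E (n - 3) = E n - E (n - 1) := by linarith
    simp [Matrix.det_fin_three]
    rw [r2, r1, ha]
    ring
  intro n
  induction n using Int.induction_on with
  | zero =>
      norm_num [Matrix.det_fin_three, em1, em2, em3, h0, h1]; rfl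
  | succ k ih =>
      rw [show (k : ℤ) + 1 = (k : ℤ) + 1 from rfl]
      rw [hstep (k : ℤ)]
      exact ih
  | pred k ih =>
      have h := hstep (-(k : ℤ) - 1)
      rw [show -(k : ℤ) - 1 + 1 = -(k : ℤ) by ring] at h
      rw [show -(k : ℤ) - 1 + 1 = -(k : ℤ) by ring, ← h]
      exact ih
end

section
/- For all integers n: E_n·E_{n+3} - E_{n+1}·E_{n+2} = E_{-n-4} and E_{n+3}² - E_{n+2}·E_{n+4} = E_{-n-4}, where E is the Narayana cows sequence extended to ℤ. -/
/-!
Both `n ↦ E n * E (n + 3) - E (n + 1) * E (n + 2)` and `n ↦ E (-n - 4)` satisfy the reversed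
recurrence `x n = x (n + 1) + x (n + 3)`. This recurrence can be run in both directions, so a
solution on `ℤ` is determined by three consecutive values, and the two solutions agree at
`n = 0, 1, 2`. The second identity follows from the first by one application of the recurrence.
-/

theorem eq_of_three_consecutive_of_rec {M : Type*} [AddCommGroup M] {f g : ℤ → M}
    (hf : ∀ n, f n = f (n + 1) + f (n + 3)) (hg : ∀ n, g n = g (n + 1) + g (n + 3))
    (h0 : f 0 = g 0) (h1 : f 1 = g 1) (h2 : f 2 = g 2) (n : ℤ) : f n = g n := by
  suffices ∀ n : ℤ, f n = g n ∧ f (n + 1) = g (n + 1) ∧ f (n + 2) = g (n + 2) from (this n).1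
  intro n
  induction n using Int.induction_on with
  | zero => exact ⟨h0, h1, h2⟩
  | succ k ih =>
    obtain ⟨e0, e1, e2⟩ := ih
    have e3 : f (k + 3) = g (k + 3) := by
      rw [eq_sub_of_add_eq' (hf k).symm, eq_sub_of_add_eq' (hg k).symm, e0, e1]
    grind
  | pred k ih =>
    obtain ⟨e0, e1, e2⟩ := ih
    have e_pred : f (-k - 1) = g (-k - 1) := by
      rw [hf, hg]
      grind
    grind

def narayanaDet {R : Type*} [CommRing R] (E : ℤ → R) (n : ℤ) : R :=
  E n * E (n + 3) - E (n + 1) * E (n + 2)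

theorem narayanaDet_eq_add {R : Type*} [CommRing R] {E : ℤ → R}
    (hrec : ∀ n, E (n + 3) = E n + E (n + 2)) (n : ℤ) :
    narayanaDet E n = narayanaDet E (n + 1) + narayanaDet E (n + 3) := by
  grind [narayanaDet]

theorem narayana_identity_45 (E : ℤ → ℤ)
    (hrec : ∀ n : ℤ, E (n + 3) = E n + E (n + 2))
    (h0 : E 0 = 0) (h1 : E 1 = 1) (h2 : E 2 = 1) :
    ∀ n : ℤ, E n * E (n + 3) - E (n + 1) * E (n + 2) = E (-n - 4) ∧
      E (n + 3) ^ 2 - E (n + 2) * E (n + 4) = E (-n - 4) := by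
  have e3 : E 3 = 1 := by have h := hrec 0; norm_num at h; linarith
  have e4 : E 4 = 2 := by have h := hrec 1; norm_num at h; linarith
  have e5 : E 5 = 3 := by have h := hrec 2; norm_num at h; linarith
  have em1 : E (-1) = 0 := by have h := hrec (-1); norm_num at h; linarith
  have em2 : E (-2) = 1 := by have h := hrec (-2); norm_num at h; linarith
  have em3 : E (-3) = 0 := by have h := hrec (-3); norm_num at h; linarith
  have em4 : E (-4) = -1 := by have h := hrec (-4); norm_num at h; linarith
  have em5 : E (-5) = 1 := by have h := hrec (-5); norm_num at h; linarith
  have em6 : E (-6) = 1 := by have h := hrec (-6); norm_num at h; linarith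
  have hreflect : ∀ m, E (-m - 4) = E (-(m + 1) - 4) + E (-(m + 3) - 4) :=
    fun m => by grind
  have hdet : ∀ n, narayanaDet E n = E (-n - 4) := by
    refine eq_of_three_consecutive_of_rec (narayanaDet_eq_add hrec) hreflect ?_ ?_ ?_ <;>
      norm_num [narayanaDet, *]
  intro n
  have hdet_n : E n * E (n + 3) - E (n + 1) * E (n + 2) = E (-n - 4) := hdet n
  have h4 : E (n + 4) = E (n + 1) + E (n + 3) := by grind
  exact ⟨hdet_n, by linear_combination hdet_n + E (n + 3) * hrec n - E (n + 2) * h4⟩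
end

section
/- For all integers n: E_{n+2}² - E_n·E_{n+4} = E_{-n-6} and E_{n+3}² - E_n·E_{n+6} = E_{-n-6}, where E is the Narayana cows sequence extended to ℤ. -/
private lemma narayana_aux (E : ℤ → ℤ)
    (hrec : ∀ n : ℤ, E (n + 3) = E n + E (n + 2))
    (h0 : E 0 = 0) (h1 : E 1 = 1) (h2 : E 2 = 1) :
    ∀ n : ℤ, E (n + 2) ^ 2 - E n * E (n + 4) = E (-n - 6) := by
  set F : ℤ → ℤ := fun n => E (n + 2) ^ 2 - E n * E (n + 4) - E (-n - 6) with hFdef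
  -- key recurrence for F
  have hF : ∀ n : ℤ, F n = F (n + 1) + F (n + 3) := by
    intro n
    have e3 : E (n + 3) = E n + E (n + 2) := hrec n
    have e4 : E (n + 4) = E (n + 1) + E (n + 3) := by
      simpa [show n + 1 + 3 = n + 4 by ring, show n + 1 + 2 = n + 3 by ring] using hrec (n + 1)
    have e5 : E (n + 5) = E (n + 2) + E (n + 4) := by
      simpa [show n + 2 + 3 = n + 5 by ring, show n + 2 + 2 = n + 4 by ring] using hrec (n + 2)
    have e6 : E (n + 6) = E (n + 3) + E (n + 5) := by
      simpa [show n + 3 + 3 = n + 6 by ring, show n + 3 + 2 = n + 5 by ring] using hrec (n + 3)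
    have e7 : E (n + 7) = E (n + 4) + E (n + 6) := by
      simpa [show n + 4 + 3 = n + 7 by ring, show n + 4 + 2 = n + 6 by ring] using hrec (n + 4)
    have eD : E (-n - 6) = E (-n - 9) + E (-n - 7) := by
      simpa [show -n - 9 + 3 = -n - 6 by ring, show -n - 9 + 2 = -n - 7 by ring] using hrec (-n - 9)
    have g1 : F (n + 1) = E (n + 3) ^ 2 - E (n + 1) * E (n + 5) - E (-n - 7) := by
      simp only [hFdef]
      congr 2 <;> ring_nf
    have g3 : F (n + 3) = E (n + 5) ^ 2 - E (n + 3) * E (n + 7) - E (-n - 9) := by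
      simp only [hFdef]
      congr 2 <;> ring_nf
    rw [g1, g3]
    simp only [hFdef]
    rw [e7, e6, e5, e4, e3, eD]
    ring
  -- explicit values
  have e3 : E 3 = 1 := by have := hrec 0; norm_num [h0, h2] at this; linarith
  have e4 : E 4 = 2 := by have := hrec 1; norm_num [h1, e3] at this; linarith
  have e5 : E 5 = 3 := by have := hrec 2; norm_num [h2, e4] at this; linarith
  have e6 : E 6 = 4 := by have := hrec 3; norm_num [e3, e5] at this; linarith
  have em1 : E (-1) = 0 := by have := hrec (-1); norm_num [h1, h2] at this; linarith
  have em2 : E (-2) = 1 := by have := hrec (-2); norm_num [h0, h1] at this; linarith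
  have em3 : E (-3) = 0 := by have := hrec (-3); norm_num [h0, em1] at this; linarith
  have em4 : E (-4) = -1 := by have := hrec (-4); norm_num [em1, em2] at this; linarith
  have em5 : E (-5) = 1 := by have := hrec (-5); norm_num [em2, em3] at this; linarith
  have em6 : E (-6) = 1 := by have := hrec (-6); norm_num [em3, em4] at this; linarith
  have em7 : E (-7) = -2 := by have := hrec (-7); norm_num [em4, em5] at this; linarith
  have em8 : E (-8) = 0 := by have := hrec (-8); norm_num [em5, em6] at this; linarith
  have F0 : F 0 = 0 := by simp only [hFdef]; norm_num [h0, h2, e4, em6]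
  have F1 : F 1 = 0 := by simp only [hFdef]; norm_num [h1, e3, e5, em7]
  have F2 : F 2 = 0 := by simp only [hFdef]; norm_num [h2, e4, e6, em8]
  have Fm1 : F (-1) = 0 := by have := hF (-1); norm_num [F0, F2] at this; linarith
  have Fm2 : F (-2) = 0 := by have := hF (-2); norm_num [Fm1, F1] at this; linarith
  have main : ∀ k : ℕ, ∀ n : ℤ, n.natAbs ≤ k + 2 → F n = 0 := by
    intro k
    induction k with
    | zero =>
      intro n hn
      have h1' : -2 ≤ n := by omega
      have h2' : n ≤ 2 := by omega
      interval_cases n <;> assumption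
    | succ k ih =>
      intro n hn
      by_cases hsmall : n.natAbs ≤ k + 2
      · exact ih n hsmall
      · have hex : n.natAbs = k + 3 := by omega
        rcases le_or_gt 0 n with hpos | hneg
        · -- n = k + 3 ≥ 3, use forward recurrence from n - 3
          have h3 : (3 : ℤ) ≤ n := by omega
          have hr := hF (n - 3)
          have hn3 : (n - 3).natAbs ≤ k + 2 := by omega
          have hn2 : (n - 2).natAbs ≤ k + 2 := by omega
          have g1 : F (n - 3) = 0 := ih _ hn3
          have g2 : F (n - 3 + 1) = 0 := by
            rw [show n - 3 + 1 = n - 2 by ring]; exact ih _ hn2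
          rw [show n - 3 + 3 = n by ring] at hr
          linarith [hr, g1, g2]
        · -- n ≤ -3
          have h3 : n ≤ -3 := by omega
          have hr := hF n
          have g1 : F (n + 1) = 0 := ih _ (by omega)
          have g2 : F (n + 3) = 0 := ih _ (by omega)
          rw [hr, g1, g2]; ring
  intro n
  have := main n.natAbs n (by omega)
  simp only [hFdef] at this
  linarith

theorem narayana_identity_46 (E : ℤ → ℤ)
    (hrec : ∀ n : ℤ, E (n + 3) = E n + E (n + 2))
    (h0 : E 0 = 0) (h1 : E 1 = 1) (h2 : E 2 = 1) :
    ∀ n : ℤ, E (n + 2) ^ 2 - E n * E (n + 4) = E (-n - 6) ∧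
      E (n + 3) ^ 2 - E n * E (n + 6) = E (-n - 6) := by
  intro n
  have key := narayana_aux E hrec h0 h1 h2 n
  refine ⟨key, ?_⟩
  -- second identity equals first, polynomially from the recurrence
  have e3 : E (n + 3) = E n + E (n + 2) := hrec n
  have e4 : E (n + 4) = E (n + 1) + E (n + 3) := by
    simpa [show n + 1 + 3 = n + 4 by ring, show n + 1 + 2 = n + 3 by ring] using hrec (n + 1)
  have e5 : E (n + 5) = E (n + 2) + E (n + 4) := by
    simpa [show n + 2 + 3 = n + 5 by ring, show n + 2 + 2 = n + 4 by ring] using hrec (n + 2)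
  have e6 : E (n + 6) = E (n + 3) + E (n + 5) := by
    simpa [show n + 3 + 3 = n + 6 by ring, show n + 3 + 2 = n + 5 by ring] using hrec (n + 3)
  rw [← key, e6, e5, e4, e3]
  ring
end

section
/- Define Δ_n as the determinant of the 3×3 matrix with rows (E_{n-2}-1, E_{n-3}, E_{n-1}), (E_{n-1}, E_{n-2}-1, E_n), (E_n, E_{n-1}, E_{n+1}-1). Then for all integers n, Δ_n = E_{n+1} - E_{-n+1} + 2(E_{n-2} - E_{-n-2}). -/
open Matrix

/-- `det (X - 1) = det X - tr (adj X) + tr X - 1` for explicit 3×3 matrices. -/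
lemma det_sub_one_fin_three (a b c d e f g h i : ℤ) :
    Matrix.det !![a - 1, b, c; d, e - 1, f; g, h, i - 1]
      = Matrix.det !![a, b, c; d, e, f; g, h, i]
        - (Matrix.adjugate !![a, b, c; d, e, f; g, h, i]).trace
        + (Matrix.trace !![a, b, c; d, e, f; g, h, i]) - 1 := by
  rw [Matrix.adjugate_fin_three_of]
  simp [Matrix.det_fin_three, Matrix.trace_fin_three_of]
  ring

theorem narayana_Delta_formula (E : ℤ → ℤ)
    (hrec : ∀ n : ℤ, E (n + 3) = E n + E (n + 2))
    (h0 : E 0 = 0) (h1 : E 1 = 1) (h2 : E 2 = 1) :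
    ∀ n : ℤ,
      Matrix.det !![E (n - 2) - 1, E (n - 3), E (n - 1);
                    E (n - 1), E (n - 2) - 1, E n;
                    E n, E (n - 1), E (n + 1) - 1]
        = E (n + 1) - E (-n + 1) + 2 * (E (n - 2) - E (-n - 2)) := by
  -- backward values
  have hm : ∀ n : ℤ, E n = E (n + 3) - E (n + 2) := fun n => by linarith [hrec n]
  have em1 : E (-1) = 0 := by have := hm (-1); norm_num at this; omega
  have em2 : E (-2) = 1 := by have := hm (-2); norm_num at this; omega
  have em3 : E (-3) = 0 := by have := hm (-3); norm_num [em1] at this; omega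
  -- the matrix family
  set A : ℤ → Matrix (Fin 3) (Fin 3) ℤ := fun n =>
    !![E (n-2), E (n-3), E (n-1); E (n-1), E (n-2), E n; E n, E (n-1), E (n+1)] with hAdef
  set C : Matrix (Fin 3) (Fin 3) ℤ := !![0,1,0; 0,0,1; 1,0,1] with hCdef
  set D : Matrix (Fin 3) (Fin 3) ℤ := !![0,-1,1; 1,0,0; 0,1,0] with hDdef
  have hCD : C * D = 1 := by
    rw [hCdef, hDdef, Matrix.mul_fin_three, Matrix.one_fin_three]; norm_num
  have hDC : D * C = 1 := by
    rw [hCdef, hDdef, Matrix.mul_fin_three, Matrix.one_fin_three]; norm_num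
  have hA0 : A 0 = 1 := by
    simp only [hAdef]
    rw [Matrix.one_fin_three]
    norm_num [em1, em2, em3, h0, h1]
  have stepR : ∀ n : ℤ, A (n+1) = A n * C := by
    intro n
    have e1 : E (n+1) = E (n-2) + E n := by
      have h := hrec (n-2)
      rw [show n-2+3 = n+1 by ring, show n-2+2 = n by ring] at h; exact h
    have e2 : E n = E (n-3) + E (n-1) := by
      have h := hrec (n-3)
      rw [show n-3+3 = n by ring, show n-3+2 = n-1 by ring] at h; exact h
    have e3 : E (n+2) = E (n-1) + E (n+1) := by
      have h := hrec (n-1)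
      rw [show n-1+3 = n+2 by ring, show n-1+2 = n+1 by ring] at h; exact h
    simp only [hAdef, hCdef]
    rw [show n+1-2 = n-1 by ring, show n+1-3 = n-2 by ring, show n+1-1 = n by ring,
      show n+1+1 = n+2 by ring, Matrix.mul_fin_three]
    ext j k
    fin_cases j <;> fin_cases k <;> simp <;> linarith [e1, e2, e3]
  have stepL : ∀ n : ℤ, A (n+1) = C * A n := by
    intro n
    have e1 : E (n+1) = E (n-2) + E n := by
      have h := hrec (n-2)
      rw [show n-2+3 = n+1 by ring, show n-2+2 = n by ring] at h; exact h
    have e2 : E n = E (n-3) + E (n-1) := by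
      have h := hrec (n-3)
      rw [show n-3+3 = n by ring, show n-3+2 = n-1 by ring] at h; exact h
    have e3 : E (n+2) = E (n-1) + E (n+1) := by
      have h := hrec (n-1)
      rw [show n-1+3 = n+2 by ring, show n-1+2 = n+1 by ring] at h; exact h
    simp only [hAdef, hCdef]
    rw [show n+1-2 = n-1 by ring, show n+1-3 = n-2 by ring, show n+1-1 = n by ring,
      show n+1+1 = n+2 by ring, Matrix.mul_fin_three]
    ext j k
    fin_cases j <;> fin_cases k <;> simp <;> linarith [e1, e2, e3]
  have stepD : ∀ n : ℤ, A (n-1) = D * A n := by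
    intro n
    have h := stepL (n-1)
    rw [show n-1+1 = n by ring] at h
    rw [h, ← Matrix.mul_assoc, hDC, Matrix.one_mul]
  -- A m * A (-m) = 1 for natural m
  have hinvN : ∀ m : ℕ, A m * A (-m) = 1 := by
    intro m
    induction m with
    | zero => simp only [Nat.cast_zero, neg_zero, hA0, Matrix.one_mul]
    | succ k ih =>
        have hneg : A (-((k:ℤ)+1)) = D * A (-k) := by
          have h := stepD (-(k:ℤ))
          rw [show -(k:ℤ) - 1 = -((k:ℤ)+1) by ring] at h; exact h
        rw [Nat.cast_succ, stepR (k:ℤ), hneg, Matrix.mul_assoc,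
          ← Matrix.mul_assoc C, hCD, Matrix.one_mul, ih]
  have hinv : ∀ n : ℤ, A n * A (-n) = 1 := by
    intro n
    rcases le_or_gt 0 n with hn | hn
    · lift n to ℕ using hn; exact hinvN n
    · obtain ⟨m, rfl⟩ : ∃ m : ℕ, n = -(m:ℤ) := ⟨n.natAbs, by omega⟩
      rw [neg_neg]
      exact mul_eq_one_comm.mp (hinvN m)
  -- det A n = 1
  have hdetC : C.det = 1 := by rw [hCdef, Matrix.det_fin_three]; norm_num [Matrix.vecHead, Matrix.vecTail]; rfl
  have hdetD : D.det = 1 := by rw [hDdef, Matrix.det_fin_three]; norm_num [Matrix.vecHead, Matrix.vecTail]; rfl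
  have hdet : ∀ n : ℤ, (A n).det = 1 := by
    have hdN : ∀ m : ℕ, (A m).det = 1 ∧ (A (-m)).det = 1 := by
      intro m
      induction m with
      | zero => constructor <;> simp [hA0]
      | succ k ih =>
          constructor
          · rw [Nat.cast_succ, stepR (k:ℤ), Matrix.det_mul, ih.1, hdetC, one_mul]
          · have h := stepD (-(k:ℤ))
            rw [Nat.cast_succ, show -((k:ℤ)+1) = -(k:ℤ) - 1 by ring, h,
              Matrix.det_mul, hdetD, ih.2, one_mul]
    intro n
    rcases le_or_gt 0 n with hn | hn
    · lift n to ℕ using hn; exact (hdN n).1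
    · obtain ⟨m, rfl⟩ : ∃ m : ℕ, n = -(m:ℤ) := ⟨n.natAbs, by omega⟩
      exact (hdN m).2
  intro n
  -- adjugate of A n is A (-n)
  have hadj : Matrix.adjugate (A n) = A (-n) := by
    calc Matrix.adjugate (A n) = Matrix.adjugate (A n) * (A n * A (-n)) := by
            rw [hinv n, Matrix.mul_one]
      _ = (Matrix.adjugate (A n) * A n) * A (-n) := by rw [Matrix.mul_assoc]
      _ = ((A n).det • (1 : Matrix (Fin 3) (Fin 3) ℤ)) * A (-n) := by
            rw [Matrix.adjugate_mul]
      _ = A (-n) := by rw [hdet n, one_smul, Matrix.one_mul]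
  have key := det_sub_one_fin_three (E (n-2)) (E (n-3)) (E (n-1)) (E (n-1)) (E (n-2))
    (E n) (E n) (E (n-1)) (E (n+1))
  have hAn : !![E (n-2), E (n-3), E (n-1); E (n-1), E (n-2), E n; E n, E (n-1), E (n+1)]
      = A n := by rw [hAdef]
  rw [hAn] at key
  rw [key, hadj, hdet n]
  have htrA : (A n).trace = E (n-2) + E (n-2) + E (n+1) := by
    simp only [hAdef]; rw [Matrix.trace_fin_three_of]
  have htrB : (A (-n)).trace = E (-n-2) + E (-n-2) + E (-n+1) := by
    simp only [hAdef]; rw [Matrix.trace_fin_three_of]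
  rw [htrA, htrB]; ring
end

section
/- Define Δ_{i,j} = E_i·E_{i+j-1} - E_{i+j}·E_{i-1} for integers i, j, where E is the Narayana sequence. Then for all integers n, i, j, the determinant of the 3×3 matrix with rows (E_n, E_{n-1}, E_{n+1}), (E_{n+i}, E_{n+i-1}, E_{n+i+1}), (E_{n+i+j}, E_{n+i+j-1}, E_{n+i+j+1}) equals Δ_{i,j} (in particular, it is independent of n). -/
private lemma det3_of (a b c d e f g h i : ℤ) :
    Matrix.det !![a, b, c; d, e, f; g, h, i] =
      a * e * i - a * f * h - b * d * i + b * f * g + c * d * h - c * e * g := by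
  simp [Matrix.det_fin_three]

theorem narayana_det_independent_of_n (E : ℤ → ℤ)
    (hrec : ∀ n : ℤ, E (n + 3) = E n + E (n + 2))
    (h0 : E 0 = 0) (h1 : E 1 = 1) (h2 : E 2 = 1) :
    ∀ n i j : ℤ,
      Matrix.det !![E n, E (n - 1), E (n + 1);
                    E (n + i), E (n + i - 1), E (n + i + 1);
                    E (n + i + j), E (n + i + j - 1), E (n + i + j + 1)]
        = E i * E (i + j - 1) - E (i + j) * E (i - 1) := by
  have hE2 : ∀ m : ℤ, E (m + 2) = E (m - 1) + E (m + 1) := by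
    intro m
    have h := hrec (m - 1)
    rw [show m - 1 + 3 = m + 2 by ring, show m - 1 + 2 = m + 1 by ring] at h
    exact h
  have hEm1 : E (-1) = 0 := by
    have h := hE2 0
    rw [show (0:ℤ) + 2 = 2 by ring, show (0:ℤ) - 1 = -1 by ring,
        show (0:ℤ) + 1 = 1 by ring, h1, h2] at h
    linarith
  intro n i j
  set D : ℤ → ℤ := fun m =>
    Matrix.det !![E m, E (m - 1), E (m + 1);
                  E (m + i), E (m + i - 1), E (m + i + 1);
                  E (m + i + j), E (m + i + j - 1), E (m + i + j + 1)] with hD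
  have step : ∀ m : ℤ, D (m + 1) = D m := by
    intro m
    simp only [hD, det3_of]
    rw [show m + 1 - 1 = m by ring, show m + 1 + 1 = m + 2 by ring,
        show m + 1 + i + j - 1 = m + i + j by ring,
        show m + 1 + i + j + 1 = (m + i + j) + 2 by ring,
        show m + 1 + i + j = (m + i + j) + 1 by ring,
        show m + 1 + i - 1 = m + i by ring,
        show m + 1 + i + 1 = (m + i) + 2 by ring,
        show m + 1 + i = (m + i) + 1 by ring,
        hE2 m, hE2 (m + i), hE2 (m + i + j)]
    ring
  have key : ∀ m : ℤ, D m = D 0 := by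
    intro m
    induction m using Int.induction_on with
    | zero => rfl
    | succ k ih => rw [step k, ih]
    | pred k ih => rw [← ih, ← step (-(k:ℤ) - 1)]; norm_num
  have h := key n
  simp only [hD] at h
  rw [h, det3_of,
      show (0:ℤ) - 1 = -1 by ring, show (0:ℤ) + 1 = 1 by ring,
      show (0:ℤ) + i + j = i + j by ring, show (0:ℤ) + i = i by ring,
      h0, h1, hEm1]
  ring
end

section
/- For all integers n: D_n² - D_{n-1}·D_{n+1} = D_{-n+3} = D_n·D_{n+3} - D_{n+1}·D_{n+2}, where D is the Padovan-type sequence extended to ℤ. -/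
/-!
Write `F n = D n * D (n + 3) - D (n + 1) * D (n + 2)`. Expanding with the recurrence shows that
`F n = F (n + 2) + F (n + 3)`, so `m ↦ F (-m)` satisfies the same recurrence as `m ↦ D (m + 3)`.
The two agree at `m = 0, 1, 2`, hence everywhere, which is `F n = D (-n + 3)`. The left-hand side
`D n ^ 2 - D (n - 1) * D (n + 1)` equals `F n` after one more application of the recurrence.
-/

section Padovan

variable {R : Type*}

theorem padovan_rec_ext [AddCommGroup R] {u v : ℤ → R}
    (hu : ∀ n, u (n + 3) = u n + u (n + 1)) (hv : ∀ n, v (n + 3) = v n + v (n + 1))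
    (h0 : u 0 = v 0) (h1 : u 1 = v 1) (h2 : u 2 = v 2) : u = v := by
  suffices h : ∀ n, u n = v n ∧ u (n + 1) = v (n + 1) ∧ u (n + 2) = v (n + 2) from
    funext fun n => (h n).1
  intro n
  induction n using Int.induction_on with
  | zero => exact ⟨h0, h1, h2⟩
  | succ k ih =>
    obtain ⟨e0, e1, e2⟩ := ih
    have e3 : u (k + 3) = v (k + 3) := by rw [hu, hv, e0, e1]
    refine ⟨e1, ?_, ?_⟩ <;> ring_nf at e2 e3 ⊢ <;> assumption
  | pred k ih =>
    obtain ⟨e0, e1, e2⟩ := ih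
    have hu' := hu (-k - 1)
    have hv' := hv (-k - 1)
    ring_nf at hu' hv' e0 e1 e2 ⊢
    refine ⟨?_, e0, e1⟩
    rw [e2, e0] at hu'
    exact add_right_cancel (hu'.symm.trans hv')

def padovanDet [CommRing R] (D : ℤ → R) (n : ℤ) : R :=
  D n * D (n + 3) - D (n + 1) * D (n + 2)

variable [CommRing R] {D : ℤ → R}

theorem padovanDet_eq_add (hD : ∀ n, D (n + 3) = D n + D (n + 1)) (n : ℤ) :
    padovanDet D n = padovanDet D (n + 2) + padovanDet D (n + 3) := by
  have h3 := hD n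
  have h4 := hD (n + 1)
  have h5 := hD (n + 2)
  have h6 := hD (n + 3)
  simp only [padovanDet]
  ring_nf at h3 h4 h5 h6 ⊢
  rw [h6, h5, h4, h3]
  ring

theorem sq_sub_mul_eq_padovanDet (hD : ∀ n, D (n + 3) = D n + D (n + 1)) (n : ℤ) :
    D n ^ 2 - D (n - 1) * D (n + 1) = padovanDet D n := by
  have h2 := hD (n - 1)
  have h3 := hD n
  simp only [padovanDet]
  ring_nf at h2 h3 ⊢
  rw [h2, h3]
  ring

theorem padovanDet_neg_rec (hD : ∀ n, D (n + 3) = D n + D (n + 1)) (m : ℤ) :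
    padovanDet D (-(m + 3)) = padovanDet D (-m) + padovanDet D (-(m + 1)) := by
  rw [padovanDet_eq_add hD, add_comm]
  ring_nf

end Padovan

theorem padovan_identity (D : ℤ → ℤ)
    (hrec : ∀ n : ℤ, D (n + 3) = D n + D (n + 1))
    (hm1 : D (-1) = -1) (h0 : D 0 = 1) (h1 : D 1 = 0) (h2 : D 2 = 0) :
    ∀ n : ℤ, D n ^ 2 - D (n - 1) * D (n + 1) = D (-n + 3) ∧
      D (-n + 3) = D n * D (n + 3) - D (n + 1) * D (n + 2) := by
  have h3 : D 3 = 1 := by simpa [h0, h1] using hrec 0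
  have h4 : D 4 = 0 := by simpa [h1, h2] using hrec 1
  have h5 : D 5 = 1 := by simpa [h2, h3] using hrec 2
  have hdet : (fun m => padovanDet D (-m)) = fun m => D (m + 3) :=
    padovan_rec_ext (padovanDet_neg_rec hrec) (fun m => by simpa only [add_right_comm m 1 3] using hrec (m + 3))
      (by simp [padovanDet, h0, h1, h2, h3]) (by norm_num [padovanDet, h0, h1, h2, h4])
      (by norm_num [padovanDet, hm1, h0, h1, h5])
  intro n
  have hn : padovanDet D n = D (-n + 3) := by
    simpa [add_comm] using congrFun hdet (-n)
  exact ⟨(sq_sub_mul_eq_padovanDet hrec n).trans hn, hn.symm⟩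
end
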